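/- arXiv:2312.14581 — 5 statements merged into one kernel-verified Lean document; each statement's English description precedes it below -/
import Mathlib

section
/- Let T be an ergodic measure-preserving map on a probability space (X,A,μ) and A a measurable set. Then for all integers j, m ≥ 1, μ({φ_A ≤ j} ∩ {φ_A ∘ T^j = m}) = μ(A ∩ {m ≤ φ_A < m + j}). -/
open MeasureTheory Filter Topology

/-- First hitting time of a set `A` under `T`. -/
noncomputable def hitTime {X : Type*} (T : X → X) (A : Set X) (x : X) : ℕ∞ :=
  sInf ((↑) '' {n : ℕ | 1 ≤ n ∧ T^[n] x ∈ A})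

section aux

variable {X : Type*} {T : X → X} {A : Set X}

lemma hitTime_eq_iff {x : X} {n : ℕ} (hn : 1 ≤ n) :
    hitTime T A x = (n : ℕ∞) ↔ (T^[n] x ∈ A ∧ ∀ i, 1 ≤ i → i < n → T^[i] x ∉ A) := by
  constructor
  · intro h
    have h1 : hitTime T A x < ((n + 1 : ℕ) : ℕ∞) := by
      rw [h]; exact_mod_cast Nat.lt_succ_self n
    rw [hitTime, sInf_lt_iff] at h1
    obtain ⟨a, ⟨k, hk, rfl⟩, hak⟩ := h1
    have hkn : k ≤ n := by exact_mod_cast Nat.lt_succ_iff.mp (by exact_mod_cast hak)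
    have hle : (n : ℕ∞) ≤ (k : ℕ∞) := h ▸ sInf_le ⟨k, hk, rfl⟩
    have hkn' : k = n := le_antisymm hkn (by exact_mod_cast hle)
    subst hkn'
    refine ⟨hk.2, fun i hi1 hin hiA => ?_⟩
    have hle2 : hitTime T A x ≤ (i : ℕ∞) := sInf_le ⟨i, ⟨hi1, hiA⟩, rfl⟩
    rw [h] at hle2
    exact absurd (by exact_mod_cast hle2 : k ≤ i) (not_le.mpr hin)
  · rintro ⟨hA', hmin⟩
    refine le_antisymm (sInf_le ⟨n, ⟨hn, hA'⟩, rfl⟩) (le_sInf ?_)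
    rintro a ⟨k, ⟨hk1, hkA⟩, rfl⟩
    by_contra hlt
    push_neg at hlt
    exact hmin k hk1 (by exact_mod_cast hlt) hkA

lemma hitTime_le_iff {x : X} {j : ℕ} :
    hitTime T A x ≤ (j : ℕ∞) ↔ ∃ i, 1 ≤ i ∧ i ≤ j ∧ T^[i] x ∈ A := by
  constructor
  · intro h
    have h1 : hitTime T A x < ((j + 1 : ℕ) : ℕ∞) :=
      lt_of_le_of_lt h (by exact_mod_cast Nat.lt_succ_self j)
    rw [hitTime, sInf_lt_iff] at h1
    obtain ⟨a, ⟨k, hk, rfl⟩, hak⟩ := h1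
    exact ⟨k, hk.1, by exact_mod_cast Nat.lt_succ_iff.mp (by exact_mod_cast hak), hk.2⟩
  · rintro ⟨i, h1, h2, h3⟩
    exact le_trans (sInf_le ⟨i, ⟨h1, h3⟩, rfl⟩) (by exact_mod_cast h2)

lemma hitTime_set_eq {n : ℕ} (hn : 1 ≤ n) :
    {y | hitTime T A y = (n : ℕ∞)} =
      T^[n] ⁻¹' A ∩ ⋂ i ∈ Finset.Ico 1 n, T^[i] ⁻¹' Aᶜ := by
  ext x
  simp only [Set.mem_setOf_eq, hitTime_eq_iff hn, Set.mem_inter_iff, Set.mem_preimage,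
    Set.mem_iInter, Finset.mem_Ico, Set.mem_compl_iff]
  tauto

lemma measurableSet_hitTime_eq [MeasurableSpace X] (hT : Measurable T)
    (hA : MeasurableSet A) {n : ℕ} (hn : 1 ≤ n) :
    MeasurableSet {y | hitTime T A y = (n : ℕ∞)} := by
  rw [hitTime_set_eq hn]
  exact ((hT.iterate n) hA).inter
    (MeasurableSet.biInter (Finset.Ico 1 n).countable_toSet
      (fun i _ => (hT.iterate i) hA.compl))

end aux

/-- For an ergodic measure-preserving map and measurable `A`, for all `j, m ≥ 1`:
`μ ({φ_A ≤ j} ∩ {φ_A ∘ T^j = m}) = μ (A ∩ {m ≤ φ_A < m + j})`. -/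
theorem stmt_3 {X : Type*} [MeasurableSpace X] {μ : Measure X} [IsProbabilityMeasure μ]
    {T : X → X} (hT : Ergodic T μ) {A : Set X} (hA : MeasurableSet A)
    {j m : ℕ} (hj : 1 ≤ j) (hm : 1 ≤ m) :
    μ ({y | hitTime T A y ≤ (j : ℕ∞)} ∩ {y | hitTime T A (T^[j] y) = (m : ℕ∞)})
      = μ (A ∩ {y | (m : ℕ∞) ≤ hitTime T A y ∧ hitTime T A y < ((m + j : ℕ) : ℕ∞)}) := by
  classical
  have hTm : Measurable T := hT.toMeasurePreserving.measurable
  set E : ℕ → Set X := fun k => A ∩ {y | hitTime T A y = (k : ℕ∞)} with hE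
  have hEmeas : ∀ k, 1 ≤ k → MeasurableSet (E k) := fun k hk =>
    hA.inter (measurableSet_hitTime_eq hTm hA hk)
  -- LHS decomposition
  have hL : {y | hitTime T A y ≤ (j : ℕ∞)} ∩ {y | hitTime T A (T^[j] y) = (m : ℕ∞)}
      = ⋃ i ∈ Finset.Icc 1 j, T^[i] ⁻¹' (E (m + j - i)) := by
    ext x
    simp only [Set.mem_inter_iff, Set.mem_setOf_eq, Set.mem_iUnion, Set.mem_preimage,
      Finset.mem_Icc, hE, Set.mem_inter_iff, Set.mem_setOf_eq]
    constructor
    · rintro ⟨h1, h2⟩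
      rw [hitTime_le_iff] at h1
      rw [hitTime_eq_iff hm] at h2
      obtain ⟨h2A, h2min⟩ := h2
      -- take the last hit time ≤ j
      set s : Finset ℕ := (Finset.Icc 1 j).filter (fun i => T^[i] x ∈ A) with hs
      have hsne : s.Nonempty := by
        obtain ⟨i, hi1, hi2, hi3⟩ := h1
        exact ⟨i, by simp [hs, hi1, hi2, hi3]⟩
      set i := s.max' hsne with hidef
      have his : i ∈ s := s.max'_mem hsne
      have hi1 : 1 ≤ i := (Finset.mem_Icc.mp (Finset.mem_filter.mp his).1).1
      have hij : i ≤ j := (Finset.mem_Icc.mp (Finset.mem_filter.mp his).1).2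
      have hiA : T^[i] x ∈ A := (Finset.mem_filter.mp his).2
      have hmax : ∀ l, i < l → l ≤ j → T^[l] x ∉ A := by
        intro l hl1 hl2 hlA
        have : l ∈ s := Finset.mem_filter.mpr ⟨Finset.mem_Icc.mpr ⟨by omega, hl2⟩, hlA⟩
        exact absurd (s.le_max' l this) (not_le.mpr hl1)
      refine ⟨i, ⟨hi1, hij⟩, hiA, ?_⟩
      rw [hitTime_eq_iff (by omega : 1 ≤ m + j - i)]
      constructor
      · have : T^[m + j - i] (T^[i] x) = T^[m] (T^[j] x) := by
          rw [← Function.iterate_add_apply, ← Function.iterate_add_apply]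
          congr 1; omega
        rw [this]; exact h2A
      · intro l hl1 hl2 hlA
        rw [← Function.iterate_add_apply] at hlA
        by_cases hc : l + i ≤ j
        · exact hmax (l + i) (by omega) hc hlA
        · have heq : T^[l + i] x = T^[l + i - j] (T^[j] x) := by
            rw [← Function.iterate_add_apply]; congr 1; omega
          rw [heq] at hlA
          exact h2min (l + i - j) (by omega) (by omega) hlA
    · rintro ⟨i, ⟨hi1, hij⟩, hiA, hit⟩
      rw [hitTime_eq_iff (by omega : 1 ≤ m + j - i)] at hit
      obtain ⟨hitA, hitmin⟩ := hit
      constructor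
      · rw [hitTime_le_iff]; exact ⟨i, hi1, hij, hiA⟩
      · rw [hitTime_eq_iff hm]
        constructor
        · have : T^[m] (T^[j] x) = T^[m + j - i] (T^[i] x) := by
            rw [← Function.iterate_add_apply, ← Function.iterate_add_apply]
            congr 1; omega
          rw [this]; exact hitA
        · intro l hl1 hl2 hlA
          rw [← Function.iterate_add_apply] at hlA
          have heq : T^[l + j] x = T^[l + j - i] (T^[i] x) := by
            rw [← Function.iterate_add_apply]; congr 1; omega
          rw [heq] at hlA
          exact hitmin (l + j - i) (by omega) (by omega) hlA
  -- RHS decomposition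
  have hR : A ∩ {y | (m : ℕ∞) ≤ hitTime T A y ∧ hitTime T A y < ((m + j : ℕ) : ℕ∞)}
      = ⋃ i ∈ Finset.Icc 1 j, E (m + j - i) := by
    ext x
    simp only [Set.mem_inter_iff, Set.mem_setOf_eq, Set.mem_iUnion, Finset.mem_Icc, hE,
      Set.mem_inter_iff, Set.mem_setOf_eq]
    constructor
    · rintro ⟨hxA, hge, hlt⟩
      lift hitTime T A x to ℕ using (ne_top_of_lt hlt) with k hk
      have hk1 : m ≤ k := by exact_mod_cast hge
      have hk2 : k < m + j := by exact_mod_cast hlt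
      exact ⟨m + j - k, ⟨by omega, by omega⟩, hxA,
        by exact_mod_cast (show k = m + j - (m + j - k) by omega)⟩
    · rintro ⟨i, ⟨hi1, hij⟩, hxA, hk⟩
      refine ⟨hxA, ?_, ?_⟩
      · rw [hk]; exact_mod_cast (by omega : m ≤ m + j - i)
      · rw [hk]; exact_mod_cast (by omega : m + j - i < m + j)
  rw [hL, hR]
  have hdisjE : ∀ i ∈ (Finset.Icc 1 j : Finset ℕ), ∀ i' ∈ (Finset.Icc 1 j : Finset ℕ),
      i ≠ i' → Disjoint (E (m + j - i)) (E (m + j - i')) := by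
    intro i hi i' hi' hne
    simp only [Finset.mem_Icc] at hi hi'
    apply Set.disjoint_left.mpr
    rintro x ⟨_, hx1⟩ ⟨_, hx2⟩
    simp only [Set.mem_setOf_eq] at hx1 hx2
    rw [hx1] at hx2
    have : m + j - i = m + j - i' := by exact_mod_cast hx2
    omega
  have key : ∀ a b : ℕ, 1 ≤ a → b ≤ j → a < b →
      Disjoint (T^[a] ⁻¹' (E (m + j - a))) (T^[b] ⁻¹' (E (m + j - b))) := by
    intro a b ha hb h
    apply Set.disjoint_left.mpr
    rintro x hx1 hx2
    simp only [Set.mem_preimage, hE, Set.mem_inter_iff, Set.mem_setOf_eq] at hx1 hx2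
    obtain ⟨_, hφa⟩ := hx1
    rw [hitTime_eq_iff (by omega : 1 ≤ m + j - a)] at hφa
    have : T^[b - a] (T^[a] x) ∉ A := hφa.2 (b - a) (by omega) (by omega)
    rw [← Function.iterate_add_apply] at this
    have heq : b - a + a = b := by omega
    rw [heq] at this
    exact this hx2.1
  have hdisjL : (↑(Finset.Icc 1 j) : Set ℕ).PairwiseDisjoint
      (fun i => T^[i] ⁻¹' (E (m + j - i))) := by
    intro a ha b hb hab
    simp only [Finset.coe_Icc, Set.mem_Icc] at ha hb
    rcases lt_or_gt_of_ne hab with h | h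
    · exact key a b ha.1 hb.2 h
    · exact (key b a hb.1 ha.2 h).symm
  have hpre : ∀ i ∈ (Finset.Icc 1 j : Finset ℕ),
      μ (T^[i] ⁻¹' (E (m + j - i))) = μ (E (m + j - i)) := by
    intro i hi
    simp only [Finset.mem_Icc] at hi
    exact (hT.toMeasurePreserving.iterate i).measure_preimage
      (hEmeas _ (by omega)).nullMeasurableSet
  rw [measure_biUnion_finset hdisjL
      (fun i hi => (hTm.iterate i) (hEmeas _ (by simp only [Finset.mem_Icc] at hi; omega))),
    measure_biUnion_finset hdisjE
      (fun i hi => hEmeas _ (by simp only [Finset.mem_Icc] at hi; omega))]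
  exact Finset.sum_congr rfl hpre
end

section
/- Let A be a measurable set with μ(A) > 0 for an ergodic measure-preserving map T, let k ≥ 1, and set B := A ∩ {φ_A ≠ k}. Then φ_B ≠ k everywhere on B, where φ_B is the first return time of B. -/
open MeasureTheory Filter Topology

lemma hitTime_le {X : Type*} {T : X → X} {A : Set X} {x : X} {n : ℕ}
    (hn : 1 ≤ n) (h : T^[n] x ∈ A) : hitTime T A x ≤ (n : ℕ∞) :=
  sInf_le ⟨n, ⟨hn, h⟩, rfl⟩

lemma hitTime_spec {X : Type*} {T : X → X} {A : Set X} {x : X} {k : ℕ}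
    (h : hitTime T A x = (k : ℕ∞)) :
    1 ≤ k ∧ T^[k] x ∈ A ∧ ∀ n, 1 ≤ n → n < k → T^[n] x ∉ A := by
  set S := {n : ℕ | 1 ≤ n ∧ T^[n] x ∈ A} with hSdef
  have hne : S.Nonempty := by
    by_contra hne
    rw [Set.not_nonempty_iff_eq_empty] at hne
    have htop : hitTime T A x = ⊤ := by
      rw [hitTime, ← hSdef, hne, Set.image_empty, sInf_empty]
    rw [htop] at h
    exact (WithTop.coe_ne_top (a := k)) h.symm
  have hcast : hitTime T A x = ((sInf S : ℕ) : ℕ∞) :=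
    (WithTop.coe_sInf' hne (OrderBot.bddBelow S)).symm
  have hS : sInf S = k := by
    have := hcast.symm.trans h
    exact_mod_cast this
  have hmem := Nat.sInf_mem hne
  rw [hS] at hmem
  refine ⟨hmem.1, hmem.2, fun n hn1 hnk hmm => ?_⟩
  have := Nat.sInf_le (s := S) ⟨hn1, hmm⟩
  omega

/-- Setting `B := A ∩ {φ_A ≠ k}`, the return time of `B` never equals `k` on `B`. -/
theorem stmt_4 {X : Type*} [MeasurableSpace X] {μ : Measure X} [IsProbabilityMeasure μ]
    {T : X → X} (hT : Ergodic T μ) {A : Set X} (hA : MeasurableSet A) (hpos : 0 < μ A)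
    {k : ℕ} (hk : 1 ≤ k) :
    ∀ x ∈ A ∩ {y | hitTime T A y ≠ (k : ℕ∞)},
      hitTime T (A ∩ {y | hitTime T A y ≠ (k : ℕ∞)}) x ≠ (k : ℕ∞) := by
  intro x hx hcon
  set B := A ∩ {y | hitTime T A y ≠ (k : ℕ∞)} with hBdef
  obtain ⟨hxA, hxne⟩ := hx
  obtain ⟨-, hkB, hBmin⟩ := hitTime_spec hcon
  -- x hits A by time k, but not exactly at k
  have hle : hitTime T A x ≤ (k : ℕ∞) := hitTime_le hk hkB.1
  have hlt : hitTime T A x < (k : ℕ∞) := lt_of_le_of_ne hle hxne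
  obtain ⟨m, hm'⟩ := WithTop.ne_top_iff_exists.mp (hlt.trans (WithTop.coe_lt_top k)).ne
  have hm : hitTime T A x = (m : ℕ∞) := hm'.symm
  have hmk : m < k := by
    rw [hm] at hlt; exact_mod_cast hlt
  obtain ⟨hm1, hmA, -⟩ := hitTime_spec hm
  -- T^[m] x ∈ A but not in B, so its hitting time of A is exactly k
  have hnotB : T^[m] x ∉ B := hBmin m hm1 hmk
  have hy : hitTime T A (T^[m] x) = (k : ℕ∞) := by
    by_contra hne
    exact hnotB ⟨hmA, hne⟩
  obtain ⟨-, -, hymin⟩ := hitTime_spec hy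
  -- but T^[k-m] (T^[m] x) = T^[k] x ∈ A with 1 ≤ k - m < k : contradiction
  refine hymin (k - m) (by omega) (by omega) ?_
  rw [← Function.iterate_add_apply]
  have : k - m + m = k := by omega
  rw [this]
  exact hkB.1
end

section
/- Suppose T is ergodic measure-preserving on (X,A,μ), (A_l) is a sequence of asymptotically rare events with normalized hitting-time distributions converging to a sub-probability distribution function F, i.e. μ(μ(A_l)φ_{A_l} ≤ t) ⇒ F(t). If (k_l) is a sequence of positive integers with μ(A_l)k_l → t > 0 where F' is continuous at t (F' being the non-increasing right-continuous density of F), then μ(φ_{A_l} = k_l) / μ(A_l) → F'(t) as l → ∞. -/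
open MeasureTheory Filter Topology
open scoped ENNReal

/-!
A point that first enters `A` at time `k + 1 ≥ 2` first enters it at time `k` after one step of
`T`, so invariance of `μ` makes `k ↦ μ(φ_A = k)` non-increasing for `k ≥ 1`: the sequence
`k ↦ μ(φ_A ≤ k)` is concave. Its increment at `k` is therefore squeezed between its slopes over
`[k - m, k]` and `[k, k + m]`. Choosing `m` with `μ(A) m → h`, convergence in distribution turns
these into the slopes of `F` over `[t - h, t]` and `[t, t + h]`, which lie between `F'(t + h)` and
`F'(t - h)` since `F'` is non-increasing; continuity of `F'` at `t` closes the squeeze as `h → 0`.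
-/

section HitTime

variable {X : Type*} {T : X → X} {A : Set X}

theorem hitTime_le_coe_iff {x : X} {k : ℕ} :
    hitTime T A x ≤ k ↔ ∃ n, 1 ≤ n ∧ n ≤ k ∧ T^[n] x ∈ A := by
  constructor
  · intro h
    by_contra! hc
    have : ((k + 1 : ℕ) : ℕ∞) ≤ hitTime T A x := le_sInf <| by
      rintro _ ⟨n, ⟨hn, hnA⟩, rfl⟩
      exact_mod_cast Nat.succ_le_of_lt (lt_of_not_ge fun hnk => hc n hn hnk hnA)
    exact absurd (this.trans h) (by norm_cast; omega)
  · rintro ⟨n, hn, hnk, hnA⟩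
    have hmem : n ∈ {n | 1 ≤ n ∧ T^[n] x ∈ A} := ⟨hn, hnA⟩
    exact (sInf_le (Set.mem_image_of_mem _ hmem)).trans (Nat.cast_le.mpr hnk)

theorem ENat.eq_coe_succ_iff {a : ℕ∞} {k : ℕ} :
    a = (k + 1 : ℕ) ↔ a ≤ (k + 1 : ℕ) ∧ ¬a ≤ k := by
  induction a using ENat.recTopCoe with
  | top => exact iff_of_false (ENat.top_ne_natCast _) fun h => h.1.not_gt (ENat.natCast_lt_top _)
  | coe a => simp only [Nat.cast_inj, Nat.cast_le]; omega

theorem setOf_hitTime_eq_succ (k : ℕ) :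
    {x | hitTime T A x = (k + 1 : ℕ)} =
      {x | hitTime T A x ≤ (k + 1 : ℕ)} \ {x | hitTime T A x ≤ k} := by
  ext x
  exact ENat.eq_coe_succ_iff

theorem hitTime_apply_of_eq_add_two {x : X} {n : ℕ} (h : hitTime T A x = (n + 1 + 1 : ℕ)) :
    hitTime T A (T x) = (n + 1 : ℕ) := by
  rw [ENat.eq_coe_succ_iff, hitTime_le_coe_iff, hitTime_le_coe_iff] at h ⊢
  obtain ⟨⟨j, hj1, hj2, hjA⟩, hnone⟩ := h
  simp only [← Function.iterate_succ_apply]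
  refine ⟨⟨n + 1, le_add_self, le_rfl, ?_⟩,
    fun ⟨i, hi1, hin, hiA⟩ => hnone ⟨i + 1, by omega, by omega, hiA⟩⟩
  obtain rfl : j = n + 1 + 1 := by
    by_contra
    exact hnone ⟨j, hj1, by omega, hjA⟩
  exact hjA

variable [MeasurableSpace X] {μ : Measure X}

theorem measurableSet_hitTime_le (hT : Measurable T) (hA : MeasurableSet A) (k : ℕ) :
    MeasurableSet {x | hitTime T A x ≤ k} := by
  have : {x | hitTime T A x ≤ k} = ⋃ n ∈ Finset.Icc 1 k, T^[n] ⁻¹' A := by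
    ext x
    simp [hitTime_le_coe_iff, and_assoc]
  rw [this]
  exact .biUnion (Finset.countable_toSet _) fun n _ => hT.iterate n hA

theorem measureReal_hitTime_le_succ [IsFiniteMeasure μ] (hT : Measurable T)
    (hA : MeasurableSet A) (k : ℕ) :
    μ.real {x | hitTime T A x ≤ (k + 1 : ℕ)} - μ.real {x | hitTime T A x ≤ k} =
      μ.real {x | hitTime T A x = (k + 1 : ℕ)} := by
  rw [setOf_hitTime_eq_succ, measureReal_sdiff _ (measurableSet_hitTime_le hT hA k)]
  exact fun x (hx : hitTime T A x ≤ k) => hx.trans (Nat.cast_le.mpr k.le_succ)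

theorem MeasureTheory.MeasurePreserving.antitoneOn_measureReal_hitTime_eq [IsFiniteMeasure μ]
    (hT : MeasurePreserving T μ μ) :
    AntitoneOn (fun k : ℕ => μ.real {x | hitTime T A x = k}) (Set.Ici 1) := by
  refine antitoneOn_nat_Ici_of_succ_le fun k hk => ?_
  obtain ⟨n, rfl⟩ := Nat.exists_eq_add_of_le' hk
  refine ENNReal.toReal_mono (measure_ne_top μ _) ?_
  calc μ {x | hitTime T A x = (n + 1 + 1 : ℕ)}
      ≤ μ (T ⁻¹' {x | hitTime T A x = (n + 1 : ℕ)}) :=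
        measure_mono fun x hx => hitTime_apply_of_eq_add_two hx
    _ ≤ μ.map T {x | hitTime T A x = (n + 1 : ℕ)} := Measure.le_map_apply hT.aemeasurable _
    _ = μ {x | hitTime T A x = (n + 1 : ℕ)} := by rw [hT.map_eq]

end HitTime

section Increments

variable {G d : ℕ → ℝ}

theorem sub_eq_sum_of_sub_eq (hG : ∀ j, G (j + 1) - G j = d (j + 1)) (a m : ℕ) :
    G (a + m) - G a = ∑ i ∈ Finset.range m, d (a + i + 1) := by
  have := Finset.sum_range_sub (fun i => G (a + i)) m
  simp only [← add_assoc, hG, add_zero] at this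
  exact this.symm

theorem sub_le_mul_of_antitoneOn (hG : ∀ j, G (j + 1) - G j = d (j + 1))
    (hd : AntitoneOn d (Set.Ici 1)) {a : ℕ} (ha : 1 ≤ a) (m : ℕ) :
    G (a + m) - G a ≤ m * d a := by
  rw [sub_eq_sum_of_sub_eq hG]
  simpa using Finset.sum_le_card_nsmul (Finset.range m) (fun i => d (a + i + 1)) (d a)
    fun i _ => hd ha (Set.mem_Ici.2 (by omega)) (by omega)

theorem mul_le_sub_of_antitoneOn (hG : ∀ j, G (j + 1) - G j = d (j + 1))
    (hd : AntitoneOn d (Set.Ici 1)) (a m : ℕ) :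
    m * d (a + m) ≤ G (a + m) - G a := by
  rw [sub_eq_sum_of_sub_eq hG]
  have hbound : ∀ i ∈ Finset.range m, d (a + m) ≤ d (a + i + 1) := fun i hi => by
    rw [Finset.mem_range] at hi
    exact hd (Set.mem_Ici.2 (by omega)) (Set.mem_Ici.2 (by omega)) (by omega)
  simpa using Finset.card_nsmul_le_sum _ _ _ hbound

end Increments

def HasAntitoneDensity (F F' : ℝ → ℝ) : Prop :=
  AntitoneOn F' (Set.Ici 0) ∧ ∀ t, 0 ≤ t → F t = ∫ s in (0 : ℝ)..t, F' s

namespace HasAntitoneDensity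

variable {F F' : ℝ → ℝ} {a b : ℝ}

theorem intervalIntegrable (hF : HasAntitoneDensity F F') (ha : 0 ≤ a) (hb : 0 ≤ b) :
    IntervalIntegrable F' volume a b :=
  (hF.1.mono fun _ hx => le_trans (le_min ha hb) hx.1).intervalIntegrable

theorem sub_eq_integral (hF : HasAntitoneDensity F F') (ha : 0 ≤ a) (hb : 0 ≤ b) :
    F b - F a = ∫ s in a..b, F' s := by
  rw [hF.2 a ha, hF.2 b hb, intervalIntegral.integral_interval_sub_left
    (hF.intervalIntegrable le_rfl hb) (hF.intervalIntegrable le_rfl ha)]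

theorem sub_le_mul (hF : HasAntitoneDensity F F') (ha : 0 ≤ a) (hab : a ≤ b) :
    F b - F a ≤ F' a * (b - a) := by
  rw [hF.sub_eq_integral ha (ha.trans hab)]
  calc ∫ s in a..b, F' s ≤ ∫ _ in a..b, F' a :=
        intervalIntegral.integral_mono_on hab (hF.intervalIntegrable ha (ha.trans hab))
          intervalIntegrable_const fun x hx => hF.1 ha (ha.trans hx.1) hx.1
    _ = F' a * (b - a) := by simp [mul_comm]

theorem mul_le_sub (hF : HasAntitoneDensity F F') (ha : 0 ≤ a) (hab : a ≤ b) :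
    F' b * (b - a) ≤ F b - F a := by
  rw [hF.sub_eq_integral ha (ha.trans hab)]
  calc F' b * (b - a) = ∫ _ in a..b, F' b := by simp [mul_comm]
    _ ≤ ∫ s in a..b, F' s :=
        intervalIntegral.integral_mono_on hab intervalIntegrable_const
          (hF.intervalIntegrable ha (ha.trans hab))
          fun x hx => hF.1 (ha.trans hx.1) (ha.trans hab) hx.2

theorem continuousAt (hF : HasAntitoneDensity F F') {s : ℝ} (hs : 0 < s) : ContinuousAt F s := by
  have hI : Set.uIcc 0 (s + 1) ∈ 𝓝 s := by
    rw [Set.uIcc_of_le (by linarith)]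
    exact Icc_mem_nhds hs (by linarith)
  have hprim := intervalIntegral.continuousOn_primitive_interval
    ((intervalIntegrable_iff').1 (hF.intervalIntegrable le_rfl (by linarith : (0 : ℝ) ≤ s + 1)))
  refine (hprim.continuousAt hI).congr ?_
  filter_upwards [hI] with u hu
  rw [Set.uIcc_of_le (by linarith)] at hu
  exact (hF.2 u hu.1).symm

end HasAntitoneDensity

theorem tendsto_measureReal_hitTime_le {X : Type*} [MeasurableSpace X] {μ : Measure X}
    [IsFiniteMeasure μ] {T : X → X} {A : ℕ → Set X} {F : ℝ → ℝ}
    (hcvg : ∀ t : ℝ, ContinuousAt F t →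
      Tendsto (fun l =>
          (μ {x | μ (A l) * ((hitTime T (A l) x : ℕ∞) : ℝ≥0∞) ≤ ENNReal.ofReal t}).toReal)
        atTop (𝓝 (F t)))
    (hF : ∀ s, 0 < s → ContinuousAt F s) {n : ℕ → ℕ} {s : ℝ} (hs : 0 < s)
    (hns : Tendsto (fun l => (μ (A l)).toReal * n l) atTop (𝓝 s)) :
    Tendsto (fun l => μ.real {x | hitTime T (A l) x ≤ n l}) atTop (𝓝 (F s)) := by
  have hmul (l : ℕ) : (μ (A l)).toReal * n l = (μ (A l) * n l).toReal := by
    simp [ENNReal.toReal_mul]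
  refine tendsto_order.2 ⟨fun a ha => ?_, fun b hb => ?_⟩
  · obtain ⟨s₁, hs₁s, hs₁, ha₁⟩ : ∃ s₁ < s, 0 < s₁ ∧ a < F s₁ :=
      ((eventually_gt_nhds hs).and ((hF s hs).eventually (lt_mem_nhds ha))).exists_lt
    filter_upwards [(tendsto_order.1 (hcvg s₁ (hF s₁ hs₁))).1 a ha₁,
      (tendsto_order.1 hns).1 s₁ hs₁s] with l hl hnl
    refine hl.trans_le (measureReal_mono fun x hx => ?_)
    rw [Set.mem_ofPred_eq] at hx ⊢
    rw [hmul, ← ENNReal.ofReal_lt_iff_lt_toReal hs₁.le (by finiteness)] at hnl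
    have := lt_of_mul_lt_mul_left' (hx.trans_lt hnl)
    rw [← ENat.toENNReal_coe, ENat.toENNReal_lt] at this
    exact this.le
  · obtain ⟨s₂, hs₂s, hb₂⟩ : ∃ s₂ > s, F s₂ < b :=
      ((hF s hs).eventually (gt_mem_nhds hb)).exists_gt
    filter_upwards [(tendsto_order.1 (hcvg s₂ (hF s₂ (hs.trans hs₂s)))).2 b hb₂,
      (tendsto_order.1 hns).2 s₂ hs₂s] with l hl hnl
    refine (measureReal_mono fun x hx => ?_).trans_lt hl
    rw [Set.mem_ofPred_eq] at hx ⊢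
    rw [hmul] at hnl
    refine le_trans ?_
      ((ENNReal.le_ofReal_iff_toReal_le (by finiteness) (hs.trans hs₂s).le).2 hnl.le)
    rw [← ENat.toENNReal_coe]
    gcongr

theorem tendsto_mul_natCeil_div {c : ℕ → ℝ} (hc : ∀ l, 0 < c l)
    (hc0 : Tendsto c atTop (𝓝 0)) {h : ℝ} (h0 : 0 ≤ h) :
    Tendsto (fun l => c l * ⌈h / c l⌉₊) atTop (𝓝 h) := by
  refine tendsto_of_tendsto_of_tendsto_of_le_of_le tendsto_const_nhds
    (by simpa using hc0.const_add h) (fun l => ?_) (fun l => ?_)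
  · exact (div_le_iff₀' (hc l)).1 (Nat.le_ceil _)
  · calc c l * ⌈h / c l⌉₊ ≤ c l * (h / c l + 1) :=
          mul_le_mul_of_nonneg_left (Nat.ceil_lt_add_one (by positivity [hc l])).le (hc l).le
      _ = h + c l := by field_simp [(hc l).ne']

section LocalLimit

variable {c : ℕ → ℝ} {G d : ℕ → ℕ → ℝ} {F F' : ℝ → ℝ} {k : ℕ → ℕ} {t : ℝ}

theorem eventually_increment_div_lt (hc : ∀ l, 0 < c l) (hc0 : Tendsto c atTop (𝓝 0))
    (hGd : ∀ l j, G l (j + 1) - G l j = d l (j + 1)) (hd : ∀ l, AntitoneOn (d l) (Set.Ici 1))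
    (hGF : ∀ (n : ℕ → ℕ) (s : ℝ), 0 < s → Tendsto (fun l => c l * n l) atTop (𝓝 s) →
      Tendsto (fun l => G l (n l)) atTop (𝓝 (F s)))
    (hF : HasAntitoneDensity F F') (ht : 0 < t) (hkt : Tendsto (fun l => c l * k l) atTop (𝓝 t))
    (hF't : ContinuousAt F' t) {b : ℝ} (hb : F' t < b) :
    ∀ᶠ l in atTop, d l (k l) / c l < b := by
  obtain ⟨u, hut, hu, hub⟩ : ∃ u < t, 0 < u ∧ F' u < b :=
    ((eventually_gt_nhds ht).and (hF't.eventually (gt_mem_nhds hb))).exists_lt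
  set m : ℕ → ℕ := fun l => ⌈(t - u) / c l⌉₊
  have hm : Tendsto (fun l => c l * m l) atTop (𝓝 (t - u)) :=
    tendsto_mul_natCeil_div hc hc0 (by linarith)
  have hmk : ∀ᶠ l in atTop, m l ≤ k l := by
    filter_upwards [(tendsto_order.1 hkt).1 (t - u) (by linarith)] with l hl
    exact Nat.ceil_le.2 ((div_le_iff₀' (hc l)).2 hl.le)
  have hkm : Tendsto (fun l => c l * (k l - m l : ℕ)) atTop (𝓝 u) := by
    refine ((hkt.sub hm).congr' ?_).trans (by rw [sub_sub_cancel])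
    filter_upwards [hmk] with l hl
    rw [Nat.cast_sub hl, mul_sub]
  have hslope : Tendsto (fun l => (G l (k l) - G l (k l - m l)) / (c l * m l)) atTop
      (𝓝 ((F t - F u) / (t - u))) :=
    ((hGF k t ht hkt).sub (hGF _ u hu hkm)).div hm (by linarith)
  have hFslope : (F t - F u) / (t - u) < b := by
    rw [div_lt_iff₀ (by linarith)]
    nlinarith [hF.sub_le_mul hu.le hut.le]
  filter_upwards [(tendsto_order.1 hslope).2 b hFslope, hmk] with l hl hlk
  refine lt_of_le_of_lt ?_ hl
  have hm0 : 0 < (m l : ℝ) := by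
    simpa [m] using div_pos (sub_pos.2 hut) (hc l)
  have hincr := mul_le_sub_of_antitoneOn (hGd l) (hd l) (k l - m l) (m l)
  rw [Nat.sub_add_cancel hlk] at hincr
  rw [div_le_div_iff₀ (hc l) (mul_pos (hc l) hm0)]
  nlinarith [hc l, hincr]

theorem eventually_lt_increment_div (hc : ∀ l, 0 < c l) (hc0 : Tendsto c atTop (𝓝 0))
    (hGd : ∀ l j, G l (j + 1) - G l j = d l (j + 1)) (hd : ∀ l, AntitoneOn (d l) (Set.Ici 1))
    (hGF : ∀ (n : ℕ → ℕ) (s : ℝ), 0 < s → Tendsto (fun l => c l * n l) atTop (𝓝 s) →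
      Tendsto (fun l => G l (n l)) atTop (𝓝 (F s)))
    (hF : HasAntitoneDensity F F') (hk : ∀ l, 1 ≤ k l) (ht : 0 < t)
    (hkt : Tendsto (fun l => c l * k l) atTop (𝓝 t))
    (hF't : ContinuousAt F' t) {a : ℝ} (ha : a < F' t) :
    ∀ᶠ l in atTop, a < d l (k l) / c l := by
  obtain ⟨u, htu, hau⟩ : ∃ u > t, a < F' u := (hF't.eventually (lt_mem_nhds ha)).exists_gt
  set m : ℕ → ℕ := fun l => ⌈(u - t) / c l⌉₊
  have hm : Tendsto (fun l => c l * m l) atTop (𝓝 (u - t)) :=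
    tendsto_mul_natCeil_div hc hc0 (by linarith)
  have hkm : Tendsto (fun l => c l * (k l + m l : ℕ)) atTop (𝓝 u) := by
    refine ((hkt.add hm).congr fun l => ?_).trans (by rw [add_sub_cancel])
    push_cast
    ring
  have hslope : Tendsto (fun l => (G l (k l + m l) - G l (k l)) / (c l * m l)) atTop
      (𝓝 ((F u - F t) / (u - t))) :=
    ((hGF _ u (ht.trans htu) hkm).sub (hGF k t ht hkt)).div hm (by linarith)
  have hFslope : a < (F u - F t) / (u - t) := by
    rw [lt_div_iff₀ (by linarith)]
    nlinarith [hF.mul_le_sub ht.le htu.le]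
  filter_upwards [(tendsto_order.1 hslope).1 a hFslope] with l hl
  refine hl.trans_le ?_
  have hm0 : 0 < (m l : ℝ) := by
    simpa [m] using div_pos (sub_pos.2 htu) (hc l)
  have hincr := sub_le_mul_of_antitoneOn (hGd l) (hd l) (hk l) (m l)
  rw [div_le_div_iff₀ (mul_pos (hc l) hm0) (hc l)]
  nlinarith [hc l, hincr]

theorem tendsto_increment_div (hc : ∀ l, 0 < c l) (hc0 : Tendsto c atTop (𝓝 0))
    (hGd : ∀ l j, G l (j + 1) - G l j = d l (j + 1)) (hd : ∀ l, AntitoneOn (d l) (Set.Ici 1))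
    (hGF : ∀ (n : ℕ → ℕ) (s : ℝ), 0 < s → Tendsto (fun l => c l * n l) atTop (𝓝 s) →
      Tendsto (fun l => G l (n l)) atTop (𝓝 (F s)))
    (hF : HasAntitoneDensity F F') (hk : ∀ l, 1 ≤ k l) (ht : 0 < t)
    (hkt : Tendsto (fun l => c l * k l) atTop (𝓝 t)) (hF't : ContinuousAt F' t) :
    Tendsto (fun l => d l (k l) / c l) atTop (𝓝 (F' t)) :=
  tendsto_order.2
    ⟨fun _ ha => eventually_lt_increment_div hc hc0 hGd hd hGF hF hk ht hkt hF't ha,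
      fun _ hb => eventually_increment_div_lt hc hc0 hGd hd hGF hF ht hkt hF't hb⟩

end LocalLimit

theorem stmt_6_general {X : Type*} [MeasurableSpace X] {μ : Measure X} [IsProbabilityMeasure μ]
    {T : X → X} (hT : Ergodic T μ) {A : ℕ → Set X} (hmeas : ∀ l, MeasurableSet (A l))
    (hpos : ∀ l, 0 < μ (A l)) (hrare : Tendsto (fun l => μ (A l)) atTop (𝓝 0))
    {F F' : ℝ → ℝ}
    (hcvg : ∀ t : ℝ, ContinuousAt F t →
      Tendsto (fun l =>
          (μ {x | μ (A l) * ((hitTime T (A l) x : ℕ∞) : ℝ≥0∞) ≤ ENNReal.ofReal t}).toReal)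
        atTop (𝓝 (F t)))
    (hF'anti : AntitoneOn F' (Set.Ici 0))
    (hdens : ∀ t : ℝ, 0 ≤ t → F t = ∫ s in (0:ℝ)..t, F' s)
    {k : ℕ → ℕ} (hk1 : ∀ l, 1 ≤ k l) {t : ℝ} (ht : 0 < t)
    (hkt : Tendsto (fun l => (μ (A l)).toReal * (k l : ℝ)) atTop (𝓝 t))
    (hF'cont : ContinuousAt F' t) :
    Tendsto (fun l => (μ {x | hitTime T (A l) x = (k l : ℕ∞)}).toReal / (μ (A l)).toReal)
      atTop (𝓝 (F' t)) := by
  have hF : HasAntitoneDensity F F' := ⟨hF'anti, hdens⟩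
  exact tendsto_increment_div (c := fun l => (μ (A l)).toReal)
    (G := fun l j => μ.real {x | hitTime T (A l) x ≤ j})
    (d := fun l j => μ.real {x | hitTime T (A l) x = j})
    (fun l => ENNReal.toReal_pos (hpos l).ne' (measure_ne_top μ _))
    ((ENNReal.tendsto_toReal ENNReal.zero_ne_top).comp hrare)
    (fun l => measureReal_hitTime_le_succ hT.measurable (hmeas l))
    (fun _ => hT.toMeasurePreserving.antitoneOn_measureReal_hitTime_eq)
    (fun _ _ hs hns => tendsto_measureReal_hitTime_le hcvg (fun _ => hF.continuousAt) hs hns)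
    hF hk1 ht hkt hF'cont

/-- Automatic local limit theorem for hitting times: if the normalized hitting times of the
asymptotically rare events `A l` converge in distribution to a sub-probability distribution
function `F` (with non-increasing right-continuous density `F'`), and `μ(A l)·k l → t > 0`
with `F'` continuous at `t`, then `μ(φ_{A l} = k l) / μ(A l) → F'(t)`. -/
theorem stmt_6 {X : Type*} [MeasurableSpace X] {μ : Measure X} [IsProbabilityMeasure μ]
    {T : X → X} (hT : Ergodic T μ) {A : ℕ → Set X} (hmeas : ∀ l, MeasurableSet (A l))
    (hpos : ∀ l, 0 < μ (A l)) (hrare : Tendsto (fun l => μ (A l)) atTop (𝓝 0))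
    {F F' : ℝ → ℝ}
    (hcvg : ∀ t : ℝ, ContinuousAt F t →
      Tendsto (fun l =>
          (μ {x | μ (A l) * ((hitTime T (A l) x : ℕ∞) : ℝ≥0∞) ≤ ENNReal.ofReal t}).toReal)
        atTop (𝓝 (F t)))
    (hF'anti : AntitoneOn F' (Set.Ici 0))
    (hF'rc : ∀ t : ℝ, 0 ≤ t → ContinuousWithinAt F' (Set.Ici t) t)
    (hdens : ∀ t : ℝ, 0 ≤ t → F t = ∫ s in (0:ℝ)..t, F' s)
    {k : ℕ → ℕ} (hk1 : ∀ l, 1 ≤ k l) {t : ℝ} (ht : 0 < t)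
    (hkt : Tendsto (fun l => (μ (A l)).toReal * (k l : ℝ)) atTop (𝓝 t))
    (hF'cont : ContinuousAt F' t) :
    Tendsto (fun l => (μ {x | hitTime T (A l) x = (k l : ℕ∞)}).toReal / (μ (A l)).toReal)
      atTop (𝓝 (F' t)) :=
  stmt_6_general hT hmeas hpos hrare hcvg hF'anti hdens hk1 ht hkt hF'cont
end

section
/- (Nearby subsets failing the return-time LLT.) Let T be ergodic measure-preserving, (A_l) asymptotically rare with μ_{A_l}(μ(A_l)φ_{A_l} ≤ t) ⇒ F̃(t) for a distribution function F̃, and let (k_l) be integers with μ(A_l)k_l converging to a continuity point of F̃. Then the sets B_l := A_l ∩ {φ_{A_l} ≠ k_l} satisfy μ(B_l) ∼ μ(A_l) and μ_{B_l}(φ_{B_l} = k_l) = 0 for all l. -/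
/-!
Removing from `A` the points that return at exactly time `k` leaves a set `B` that never returns
at time `k`: a point `x ∈ B` first entering `B` at time `k` enters `A` earlier, at some time
`m < k`, at a point of `A \ B`, i.e. one whose first return to `A` happens at time `k`; but from
there `T^[k] x ∈ A` is reached after only `k - m` steps.

The removed mass is `μ_A(φ_A = k)`, an atom of the normalised return-time law at level
`μ(A) k → t₀`. It lies between the distribution functions at continuity points `t₁ < t₀ < t₂`,
whose limits `F t₁`, `F t₂` are arbitrarily close because `t₀` is a continuity point of `F`, so
it tends to `0`.
-/
open MeasureTheory ProbabilityTheory Filter Topology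
open scoped ENNReal

section HitTime

variable {X : Type*} {T : X → X} {A B : Set X} {x : X}

theorem hitTime_le_of_iterate_mem {n : ℕ} (hn : 1 ≤ n) (h : T^[n] x ∈ A) :
    hitTime T A x ≤ n :=
  sInf_le ⟨n, ⟨hn, h⟩, rfl⟩

theorem one_le_hitTime : 1 ≤ hitTime T A x :=
  le_sInf <| by
    rintro _ ⟨m, ⟨hm, -⟩, rfl⟩
    exact_mod_cast hm

theorem hitTime_anti (h : A ⊆ B) : hitTime T B x ≤ hitTime T A x :=
  sInf_le_sInf <| Set.image_mono fun _ ⟨hn, hA⟩ => ⟨hn, h hA⟩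

theorem iterate_hitTime_mem {n : ℕ} (h : hitTime T A x = n) : T^[n] x ∈ A := by
  have hne : ((↑) '' {n : ℕ | 1 ≤ n ∧ T^[n] x ∈ A} : Set ℕ∞).Nonempty := by
    by_contra hempty
    simp [hitTime, Set.not_nonempty_iff_eq_empty.1 hempty] at h
  obtain ⟨m, ⟨-, hm⟩, hmn⟩ := csInf_mem hne
  rwa [← ENat.natCast_inj.1 (hmn.trans h)]

theorem hitTime_le_natCast_iff {n : ℕ} :
    hitTime T A x ≤ n ↔ ∃ m, 1 ≤ m ∧ m ≤ n ∧ T^[m] x ∈ A := by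
  refine ⟨fun h => ?_, fun ⟨m, hm, hmn, hA⟩ => (hitTime_le_of_iterate_mem hm hA).trans
    (by exact_mod_cast hmn)⟩
  obtain ⟨m, hm⟩ := ENat.ne_top_iff_exists.1 (ne_top_of_le_ne_top (ENat.natCast_ne_top n) h)
  have h1 : (1 : ℕ∞) ≤ m := hm ▸ one_le_hitTime
  rw [← hm] at h
  exact ⟨m, by exact_mod_cast h1, by exact_mod_cast h, iterate_hitTime_mem hm.symm⟩

theorem hitTime_inter_hitTime_ne_ne {k : ℕ} (hx : x ∈ A ∩ {y | hitTime T A y ≠ k}) :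
    hitTime T (A ∩ {y | hitTime T A y ≠ k}) x ≠ k := by
  set B := A ∩ {y | hitTime T A y ≠ k}
  intro hBk
  have hkB : T^[k] x ∈ B := iterate_hitTime_mem hBk
  have hlt : hitTime T A x < k :=
    lt_of_le_of_ne (hBk ▸ hitTime_anti Set.inter_subset_left) hx.2
  obtain ⟨m, hm⟩ := ENat.ne_top_iff_exists.1 (ne_top_of_lt hlt)
  have hm1 : 1 ≤ m := by exact_mod_cast hm ▸ (one_le_hitTime : 1 ≤ hitTime T A x)
  have hmk : m < k := by exact_mod_cast hm ▸ hlt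
  have hmB : T^[m] x ∉ B := fun h => by
    have := hBk ▸ hitTime_le_of_iterate_mem hm1 h
    exact absurd (by exact_mod_cast this : k ≤ m) (by omega)
  have hreturn : hitTime T A (T^[m] x) = k := by
    by_contra hne
    exact hmB ⟨iterate_hitTime_mem hm.symm, hne⟩
  have hshort : T^[k - m] (T^[m] x) ∈ A := by
    rw [← Function.iterate_add_apply, Nat.sub_add_cancel hmk.le]
    exact hkB.1
  have := hreturn ▸ hitTime_le_of_iterate_mem (by omega) hshort
  exact absurd (by exact_mod_cast this : k ≤ k - m) (by omega)

end HitTime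

theorem ENat.measurable_of_measurableSet_le {X : Type*} [MeasurableSpace X] {f : X → ℕ∞}
    (hf : ∀ n : ℕ, MeasurableSet {x | f x ≤ n}) : Measurable f := by
  refine measurable_to_countable' fun c => ?_
  induction c using ENat.recTopCoe with
  | top =>
    have : f ⁻¹' {⊤} = (⋃ n : ℕ, {x | f x ≤ n})ᶜ := by
      ext x
      simp [ENat.eq_top_iff_forall_gt]
    rw [this]
    exact (MeasurableSet.iUnion hf).compl
  | coe n =>
    cases n with
    | zero =>
      convert hf 0 using 1
      ext x
      simp
    | succ n =>
      have : f ⁻¹' {((n + 1 : ℕ) : ℕ∞)} = {x | f x ≤ (n + 1 : ℕ)} \ {x | f x ≤ n} := by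
        ext x
        simp only [Set.mem_preimage, Set.mem_singleton_iff, Set.mem_sdiff, Set.mem_ofPred_eq,
          not_le, ← ENat.natCast_add_one_le_iff, le_antisymm_iff, Nat.cast_add, Nat.cast_one]
      rw [this]
      exact (hf _).diff (hf n)

theorem measurable_hitTime {X : Type*} [MeasurableSpace X] {T : X → X} (hT : Measurable T)
    {A : Set X} (hA : MeasurableSet A) : Measurable (hitTime T A) := by
  refine ENat.measurable_of_measurableSet_le fun n => ?_
  have : {x | hitTime T A x ≤ n} = ⋃ m ∈ Finset.Icc 1 n, T^[m] ⁻¹' A := by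
    ext x
    simp [hitTime_le_natCast_iff, and_assoc]
  rw [this]
  exact .biUnion (Finset.Icc 1 n).countable_toSet fun m _ => hT.iterate m hA
section Atoms

variable {X : Type*} [MeasurableSpace X]

theorem Monotone.exists_continuousAt_sub_lt {F : ℝ → ℝ} (hF : Monotone F) {t₀ ε : ℝ}
    (ht₀ : ContinuousAt F t₀) (hε : 0 < ε) :
    ∃ t₁ t₂, t₁ < t₀ ∧ t₀ < t₂ ∧ ContinuousAt F t₁ ∧ ContinuousAt F t₂ ∧ F t₂ - F t₁ < ε := by
  have hnear : ∀ᶠ t in 𝓝 t₀, F t ∈ Set.Ioo (F t₀ - ε / 2) (F t₀ + ε / 2) :=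
    ht₀ (Ioo_mem_nhds (by linarith) (by linarith))
  obtain ⟨a, b, ⟨ha, hb⟩, hab⟩ := mem_nhds_iff_exists_Ioo_subset.1 hnear
  have hdense : Dense {t | ContinuousAt F t} := by
    simpa only [Set.compl_ofPred, not_not] using hF.countable_not_continuousAt.dense_compl ℝ
  obtain ⟨t₁, hc₁, ht₁⟩ := hdense.exists_between ha
  obtain ⟨t₂, hc₂, ht₂⟩ := hdense.exists_between hb
  have h₁ : F t₁ ∈ Set.Ioo _ _ := hab (show t₁ ∈ Set.Ioo a b from ⟨ht₁.1, ht₁.2.trans hb⟩)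
  have h₂ : F t₂ ∈ Set.Ioo _ _ := hab (show t₂ ∈ Set.Ioo a b from ⟨ha.trans ht₂.1, ht₂.2⟩)
  exact ⟨t₁, t₂, ht₁.2, ht₂.1, hc₁, hc₂, by linarith [h₁.1, h₂.2]⟩

theorem measureReal_eq_ofReal_le_sub {ν : Measure X} [IsFiniteMeasure ν] {Y : X → ℝ≥0∞}
    (hY : Measurable Y) (hY0 : ∀ x, Y x ≠ 0) {s t₁ t₂ : ℝ} (h₁ : t₁ < s) (h₂ : s ≤ t₂) :
    ν.real {x | Y x = ENNReal.ofReal s} ≤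
      ν.real {x | Y x ≤ ENNReal.ofReal t₂} - ν.real {x | Y x ≤ ENNReal.ofReal t₁} := by
  have hmono : {x | Y x ≤ ENNReal.ofReal t₁} ⊆ {x | Y x ≤ ENNReal.ofReal t₂} :=
    fun x (hx : Y x ≤ _) => hx.trans (ENNReal.ofReal_le_ofReal (h₁.trans_le h₂).le)
  rw [← measureReal_sdiff hmono (measurableSet_le hY measurable_const)]
  refine measureReal_mono fun x (hx : Y x = _) =>
    ⟨hx.trans_le (ENNReal.ofReal_le_ofReal h₂), fun hle => ?_⟩
  have hs : 0 < s := by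
    by_contra! hs
    exact hY0 x (by rw [hx, ENNReal.ofReal_eq_zero.2 hs])
  exact (hx ▸ hle : ENNReal.ofReal s ≤ _).not_gt ((ENNReal.ofReal_lt_ofReal_iff hs).2 h₁)

theorem tendsto_measureReal_atom_of_tendsto_cdf {ν : ℕ → Measure X} [∀ l, IsFiniteMeasure (ν l)]
    {Y : ℕ → X → ℝ≥0∞} (hY : ∀ l, Measurable (Y l)) (hY0 : ∀ l x, Y l x ≠ 0) {F : ℝ → ℝ}
    (hF : Monotone F) (hcvg : ∀ t, ContinuousAt F t →
      Tendsto (fun l => (ν l).real {x | Y l x ≤ ENNReal.ofReal t}) atTop (𝓝 (F t)))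
    {s : ℕ → ℝ} {t₀ : ℝ} (ht₀ : ContinuousAt F t₀) (hs : Tendsto s atTop (𝓝 t₀)) :
    Tendsto (fun l => (ν l).real {x | Y l x = ENNReal.ofReal (s l)}) atTop (𝓝 0) := by
  refine tendsto_order.2
    ⟨fun a ha => .of_forall fun l => ha.trans_le measureReal_nonneg, fun ε hε => ?_⟩
  obtain ⟨t₁, t₂, ht₁, ht₂, hc₁, hc₂, hF₁₂⟩ := hF.exists_continuousAt_sub_lt ht₀ hε
  filter_upwards [((hcvg t₂ hc₂).sub (hcvg t₁ hc₁)).eventually_lt_const hF₁₂,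
    hs (Ioo_mem_nhds ht₁ ht₂)] with l hlt hsl
  exact (measureReal_eq_ofReal_le_sub (hY l) (hY0 l) hsl.1 hsl.2.le).trans_lt hlt

theorem toReal_measure_inter_compl_div {μ : Measure X} [IsFiniteMeasure μ] {A E : Set X}
    (hA : MeasurableSet A) (hA0 : μ A ≠ 0) (hE : MeasurableSet E) :
    (μ (A ∩ Eᶜ)).toReal / (μ A).toReal = 1 - (μ[|A]).real E := by
  have := cond_isProbabilityMeasure (μ := μ) hA0
  rw [← probReal_compl_eq_one_sub hE, measureReal_def, cond_apply hA, ENNReal.toReal_mul,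
    ENNReal.toReal_inv, inv_mul_eq_div]

end Atoms

theorem stmt_11_general {X : Type*} [MeasurableSpace X] {μ : Measure X} [IsProbabilityMeasure μ]
    {T : X → X} (hT : Ergodic T μ) {A : ℕ → Set X} (hmeas : ∀ l, MeasurableSet (A l))
    (hpos : ∀ l, 0 < μ (A l))
    {Ft : ℝ → ℝ} (hFt_mono : Monotone Ft)
    (hcvg : ∀ t : ℝ, ContinuousAt Ft t →
      Tendsto (fun l =>
          ((μ[|A l]) {x | μ (A l) * ((hitTime T (A l) x : ℕ∞) : ℝ≥0∞) ≤ ENNReal.ofReal t}).toReal)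
        atTop (𝓝 (Ft t)))
    {k : ℕ → ℕ} {t₀ : ℝ} (hcont : ContinuousAt Ft t₀)
    (hkt : Tendsto (fun l => (μ (A l)).toReal * (k l : ℝ)) atTop (𝓝 t₀)) :
    Tendsto (fun l =>
        (μ (A l ∩ {x | hitTime T (A l) x ≠ (k l : ℕ∞)})).toReal / (μ (A l)).toReal)
      atTop (𝓝 1) ∧
    ∀ l : ℕ,
      (μ[|A l ∩ {x | hitTime T (A l) x ≠ (k l : ℕ∞)}])
        {x | hitTime T (A l ∩ {y | hitTime T (A l) y ≠ (k l : ℕ∞)}) x = (k l : ℕ∞)} = 0 := by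
  have hφ l : Measurable (hitTime T (A l)) := measurable_hitTime hT.measurable (hmeas l)
  have hK l : MeasurableSet {x | hitTime T (A l) x = k l} := hφ l (measurableSet_singleton _)
  have hA0 l : μ (A l) ≠ 0 := (hpos l).ne'
  have hlevel l : {x | μ (A l) * (hitTime T (A l) x : ℝ≥0∞) =
      ENNReal.ofReal ((μ (A l)).toReal * k l)} = {x | hitTime T (A l) x = k l} := by
    ext x
    rw [Set.mem_ofPred_eq, Set.mem_ofPred_eq, ENNReal.ofReal_mul ENNReal.toReal_nonneg,
      ENNReal.ofReal_toReal (measure_ne_top _ _), ENNReal.ofReal_natCast, ← ENat.toENNReal_coe,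
      ENNReal.mul_right_inj (hA0 l) (measure_ne_top _ _), ENat.toENNReal_inj]
  have hatom : Tendsto (fun l => (μ[|A l]).real {x | hitTime T (A l) x = k l}) atTop (𝓝 0) := by
    simpa only [hlevel] using tendsto_measureReal_atom_of_tendsto_cdf (ν := fun l => μ[|A l])
      (Y := fun l x => μ (A l) * (hitTime T (A l) x : ℝ≥0∞))
      (fun l => (Measurable.of_discrete.comp (hφ l)).const_mul _)
      (fun l x => mul_ne_zero (hA0 l) (by simpa using one_le_hitTime.trans_lt' zero_lt_one |>.ne'))
      hFt_mono hcvg hcont hkt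
  refine ⟨?_, fun l => ?_⟩
  · have hratio l := toReal_measure_inter_compl_div (hmeas l) (hA0 l) (hK l)
    refine Tendsto.congr (fun l => (hratio l).symm) ?_
    simpa only [sub_zero] using (tendsto_const_nhds (x := (1 : ℝ))).sub hatom
  · set B := A l ∩ {x | hitTime T (A l) x ≠ k l}
    have hB : MeasurableSet B := (hmeas l).inter (hK l).compl
    have hempty : B ∩ {x | hitTime T B x = k l} = ∅ :=
      Set.eq_empty_of_forall_notMem fun x hx => hitTime_inter_hitTime_ne_ne hx.1 hx.2
    rw [cond_apply hB, hempty, measure_empty, mul_zero]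

/-- Nearby subsets failing the return-time LLT: if the normalized return times of `A l`
converge in distribution to `F̃` and `μ(A l)·k l` converges to a continuity point of `F̃`,
then the sets `B l := A l ∩ {φ_{A l} ≠ k l}` satisfy `μ(B l) ∼ μ(A l)` while
`μ_{B l}(φ_{B l} = k l) = 0` for all `l`. -/
theorem stmt_11 {X : Type*} [MeasurableSpace X] {μ : Measure X} [IsProbabilityMeasure μ]
    {T : X → X} (hT : Ergodic T μ) {A : ℕ → Set X} (hmeas : ∀ l, MeasurableSet (A l))
    (hpos : ∀ l, 0 < μ (A l)) (hrare : Tendsto (fun l => μ (A l)) atTop (𝓝 0))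
    {Ft : ℝ → ℝ} (hFt_mono : Monotone Ft) (hFt_one : Tendsto Ft atTop (𝓝 1))
    (hcvg : ∀ t : ℝ, ContinuousAt Ft t →
      Tendsto (fun l =>
          ((μ[|A l]) {x | μ (A l) * ((hitTime T (A l) x : ℕ∞) : ℝ≥0∞) ≤ ENNReal.ofReal t}).toReal)
        atTop (𝓝 (Ft t)))
    {k : ℕ → ℕ} {t₀ : ℝ} (hcont : ContinuousAt Ft t₀)
    (hkt : Tendsto (fun l => (μ (A l)).toReal * (k l : ℝ)) atTop (𝓝 t₀)) :
    Tendsto (fun l =>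
        (μ (A l ∩ {x | hitTime T (A l) x ≠ (k l : ℕ∞)})).toReal / (μ (A l)).toReal)
      atTop (𝓝 1) ∧
    ∀ l : ℕ,
      (μ[|A l ∩ {x | hitTime T (A l) x ≠ (k l : ℕ∞)}])
        {x | hitTime T (A l ∩ {y | hitTime T (A l) y ≠ (k l : ℕ∞)}) x = (k l : ℕ∞)} = 0 :=
  stmt_11_general hT hmeas hpos hFt_mono hcvg hcont hkt
end

section
/- (Periodic point return structure in GM systems.) Let x* be a periodic point of minimal period p in a Markov piecewise invertible system, with cylinders A_n := ξ_n(x*) = [Z_0,...,Z_{n−1}] defined for all n, where Z_i := ξ(T^i x*) satisfies Z_{i+p} = Z_i. Let W = [W_0,...,W_{l+p−1}] be a rank-(l+p) cylinder with W ⊆ A_l but W ≠ A_{l+p}, and let p ≤ j ≤ l − p with l ≥ 2p. Then T^j W ∩ A_l = ∅ (mod μ). -/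
open MeasureTheory Filter Topology
open scoped ENNReal

/-- The rank-`n` cylinder determined by the word `w` for the system `(T, ξ)`. -/
def cylinder {X : Type*} {ι : Type*} (T : X → X) (ξ : ι → Set X) (w : ℕ → ι) (n : ℕ) :
    Set X :=
  ⋂ i ∈ Finset.range n, T^[i] ⁻¹' ξ (w i)

/-- Periodic point return structure: let `x*` have periodic coding `Z` of period `p`
(`Z_{i+p} = Z_i`), `A_n` the rank-`n` cylinders along `Z`, and `W` a rank-`(l+p)` cylinder
word agreeing with `Z` on the first `l` coordinates (`W ⊆ A_l`) but not on all `l+p`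
coordinates (`W ≠ A_{l+p}`). Then for `p ≤ j ≤ l − p` and `l ≥ 2p`, the image `T^j W` is
disjoint from `A_l` mod `μ`. -/
theorem stmt_15 {X : Type*} [MeasurableSpace X] {μ : Measure X} [IsProbabilityMeasure μ]
    {T : X → X} (hT : MeasurePreserving T μ μ)
    {ι : Type*} {ξ : ι → Set X}
    (hdisj : Pairwise (Function.onFun Disjoint ξ))
    (hMarkov : ∀ i j, 0 < μ (T '' ξ i ∩ ξ j) → μ (ξ j \ T '' ξ i) = 0)
    {p j l : ℕ} (hp : 1 ≤ p) (hpj : p ≤ j) (hjl : j + p ≤ l) (h2p : 2 * p ≤ l)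
    {Z W : ℕ → ι} (hper : ∀ i, Z (i + p) = Z i)
    (hWZ : ∀ i < l, W i = Z i) (hne : ∃ i < l + p, W i ≠ Z i) :
    μ (T^[j] '' cylinder T ξ W (l + p) ∩ cylinder T ξ Z l) = 0 := by
  -- Z is determined by residue mod p
  have hmod : ∀ i, Z i = Z (i % p) := by
    intro i
    induction i using Nat.strong_induction_on with
    | _ i ih =>
      rcases lt_or_ge i p with h | h
      · rw [Nat.mod_eq_of_lt h]
      · have h1 : i = (i - p) + p := (Nat.sub_add_cancel h).symm
        have h2 : Z i = Z (i - p) := by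
          have := hper (i - p); rw [← h1] at this; exact this
        have h3 : (i - p) % p = i % p := by
          conv_rhs => rw [h1]
          rw [Nat.add_mod_right]
        rw [h2, ih (i - p) (by omega), h3]
  suffices hempty : T^[j] '' cylinder T ξ W (l + p) ∩ cylinder T ξ Z l = ∅ by
    rw [hempty, measure_empty]
  rw [Set.eq_empty_iff_forall_notMem]
  rintro y ⟨⟨x, hx, rfl⟩, hy⟩
  have hxW : ∀ i < l + p, T^[i] x ∈ ξ (W i) := by
    intro i hi
    have := Set.mem_iInter₂.mp hx i (Finset.mem_range.mpr hi)
    exact this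
  have hyZ : ∀ i < l, T^[i] (T^[j] x) ∈ ξ (Z i) := by
    intro i hi
    have := Set.mem_iInter₂.mp hy i (Finset.mem_range.mpr hi)
    exact this
  -- from disjointness: W (j+i) = Z i for j+i < l+p
  have hkey : ∀ i, j + i < l + p → W (j + i) = Z i := by
    intro i hi
    have hil : i < l := by omega
    have h1 : T^[j + i] x ∈ ξ (W (j + i)) := hxW _ hi
    have h2 : T^[j + i] x ∈ ξ (Z i) := by
      have := hyZ i hil
      rwa [← Function.iterate_add_apply, Nat.add_comm i j] at this
    by_contra hne'
    exact Set.disjoint_left.mp (hdisj hne') h1 h2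
  -- Z has period j on [0, l-j)
  have hperj : ∀ i, i + j < l → Z (i + j) = Z i := by
    intro i hi
    have := hkey i (by omega)
    rw [Nat.add_comm j i] at this
    rw [← this, hWZ _ hi]
  -- Z has period j everywhere
  have hperjall : ∀ i, Z (i + j) = Z i := by
    intro i
    have hm : i % p < p := Nat.mod_lt _ hp
    have e0 : (i + j) % p = (i % p + j) % p := by
      rw [Nat.add_mod, Nat.add_mod (i % p) j]
      rw [Nat.mod_mod_of_dvd i dvd_rfl]
    have e1 : Z (i + j) = Z (i % p + j) := by
      rw [hmod (i + j), hmod (i % p + j), e0]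
    rw [e1, hperj _ (by omega), ← hmod]
  obtain ⟨i₀, hi₀, hWne⟩ := hne
  have hi₀l : l ≤ i₀ := by
    by_contra h
    exact hWne (hWZ _ (by omega))
  have hji₀ : j ≤ i₀ := by omega
  have := hkey (i₀ - j) (by omega)
  rw [Nat.add_sub_cancel' hji₀] at this
  apply hWne
  rw [this]
  have := hperjall (i₀ - j)
  rw [Nat.sub_add_cancel hji₀] at this
  exact this.symm
end
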